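/- Let V₁, V₂ ∈ L^∞(ℝ^d) with V₁(x) ≥ V₂(x) for a.e. x ∈ ℝ^d, and let u₁, u₂ ∈ K. Then the pointwise minimum min{u₁, u₂} and maximum max{u₁, u₂} both belong to K, and the energies satisfy F_{V₁}(min{u₁, u₂}) + F_{V₂}(max{u₁, u₂}) ≤ F_{V₁}(u₁) + F_{V₂}(u₂). -/

import Mathlib

open MeasureTheory Metric Set Real

noncomputable section

/-- The admissible class `K`: Lipschitz functions `u : ℝ^d → ℝ` with `0 ≤ u ≤ 1`
pointwise, `u ∈ L²`, and `|∇u| ∈ L²` (where `∇u` is the a.e. defined gradient,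
realized via Mathlib's `gradient`, which is junk at non-differentiability points). -/
def memK (d : ℕ) (u : EuclideanSpace ℝ (Fin d) → ℝ) : Prop :=
  (∃ L : NNReal, LipschitzWith L u) ∧
  (∀ x, 0 ≤ u x ∧ u x ≤ 1) ∧
  MemLp u 2 (volume : Measure (EuclideanSpace ℝ (Fin d))) ∧
  MemLp (fun x => ‖gradient u x‖) 2 (volume : Measure (EuclideanSpace ℝ (Fin d)))

/-- The energy functional `F_V(u) = ∫ (|∇u|² + V u²)`. -/
def FV (d : ℕ) (V u : EuclideanSpace ℝ (Fin d) → ℝ) : ℝ :=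
  ∫ x : EuclideanSpace ℝ (Fin d), (‖gradient u x‖ ^ 2 + V x * u x ^ 2)

/-- `u` is a local minimizer of `F_V` on `K`. -/
def IsLocalMinimizer (d : ℕ) (V u : EuclideanSpace ℝ (Fin d) → ℝ) : Prop :=
  memK d u ∧ ∃ δ > 0, ∀ v, memK d v →
    (∫ x : EuclideanSpace ℝ (Fin d), (v x - u x) ^ 2)
      + (∫ x : EuclideanSpace ℝ (Fin d), ‖gradient v x - gradient u x‖ ^ 2) ≤ δ →
    FV d V u ≤ FV d V v

/-- `u` is a global minimizer of `F_V` on `K`. -/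
def IsGlobalMinimizer (d : ℕ) (V u : EuclideanSpace ℝ (Fin d) → ℝ) : Prop :=
  memK d u ∧ ∀ v, memK d v → FV d V u ≤ FV d V v


open Filter Asymptotics Topology Pointwise



/-- On the set where two functions agree, their fderivs agree a.e. -/
lemma ae_fderiv_eq_of_eq {d : ℕ} (f g : EuclideanSpace ℝ (Fin d) → ℝ)
    (hfc : Continuous f) (hgc : Continuous g) :
    ∀ᵐ x ∂(volume : Measure (EuclideanSpace ℝ (Fin d))),
      f x = g x → DifferentiableAt ℝ f x → DifferentiableAt ℝ g x →
        fderiv ℝ f x = fderiv ℝ g x := by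
  set s : Set (EuclideanSpace ℝ (Fin d)) := {x | f x = g x} with hs_def
  have hs : MeasurableSet s := (isClosed_eq hfc hgc).measurableSet
  have : ∀ᵐ x ∂(volume : Measure (EuclideanSpace ℝ (Fin d))), x ∈ s →
      (DifferentiableAt ℝ f x → DifferentiableAt ℝ g x → fderiv ℝ f x = fderiv ℝ g x) := by
    rw [← ae_restrict_iff' hs]
    filter_upwards [Besicovitch.ae_tendsto_measure_inter_div
      (volume : Measure (EuclideanSpace ℝ (Fin d))) s, ae_restrict_mem hs]
    intro x hx hxs hdf hdg
    set A : EuclideanSpace ℝ (Fin d) →L[ℝ] ℝ := fderiv ℝ f x - fderiv ℝ g x with hA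
    suffices hA0 : A = 0 by
      have := sub_eq_zero.1 hA0
      exact this
    ext1 z
    simp only [ContinuousLinearMap.zero_apply]
    have hz0 : ‖A z‖ ≤ 0 := by
      have H : ∀ ε : ℝ, 0 < ε → ‖A z‖ ≤ 2 * ε * (‖z‖ + ε) + ‖A‖ * ε := by
        intro ε εpos
        have B₁ : ∀ᶠ r in 𝓝[>] (0 : ℝ), (s ∩ ({x} + r • closedBall z ε)).Nonempty :=
          MeasureTheory.Measure.eventually_nonempty_inter_smul_of_density_one volume s x hx _
            measurableSet_closedBall (measure_closedBall_pos volume z εpos).ne'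
        obtain ⟨ρ, ρpos, hρ⟩ : ∃ ρ > 0, ∀ y ∈ ball x ρ,
            ‖f y - f x - fderiv ℝ f x (y - x)‖ ≤ ε * ‖y - x‖ ∧
            ‖g y - g x - fderiv ℝ g x (y - x)‖ ≤ ε * ‖y - x‖ := by
          have hf' := (hdf.hasFDerivAt.isLittleO).def εpos
          have hg' := (hdg.hasFDerivAt.isLittleO).def εpos
          have := Metric.eventually_nhds_iff_ball.1 (hf'.and hg')
          obtain ⟨ρ, ρpos, hρ⟩ := this
          exact ⟨ρ, ρpos, fun y hy => by simpa using hρ y hy⟩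
        have B₂ : ∀ᶠ r in 𝓝[>] (0 : ℝ), {x} + r • closedBall z ε ⊆ ball x ρ :=
          nhdsWithin_le_nhds
            (eventually_singleton_add_smul_subset isBounded_closedBall (ball_mem_nhds x ρpos))
        obtain ⟨r, ⟨y, ys, hy⟩, rρ, rpos⟩ :
            ∃ r : ℝ, (s ∩ ({x} + r • closedBall z ε)).Nonempty ∧
              ({x} + r • closedBall z ε ⊆ ball x ρ) ∧ 0 < r :=
          (B₁.and (B₂.and self_mem_nhdsWithin)).exists
        obtain ⟨a, az, ya⟩ : ∃ a, a ∈ closedBall z ε ∧ y = x + r • a := by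
          simp only [mem_smul_set, image_add_left, mem_preimage, singleton_add] at hy
          rcases hy with ⟨a, az, ha⟩
          exact ⟨a, az, by rw [ha]; abel⟩
        have hyb : y ∈ ball x ρ := rρ hy
        have hfy := (hρ y hyb).1
        have hgy := (hρ y hyb).2
        have fgx : f x = g x := hxs
        have fgy : f y = g y := ys
        have keyA : A (y - x) =
            (g y - g x - fderiv ℝ g x (y - x)) - (f y - f x - fderiv ℝ f x (y - x)) := by
          simp only [hA, ContinuousLinearMap.sub_apply]
          rw [fgy, fgx]; ring
        have hAyx : ‖A (y - x)‖ ≤ 2 * ε * ‖y - x‖ := by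
          rw [keyA]
          calc ‖_ - _‖ ≤ ‖g y - g x - fderiv ℝ g x (y - x)‖ +
              ‖f y - f x - fderiv ℝ f x (y - x)‖ := norm_sub_le _ _
            _ ≤ ε * ‖y - x‖ + ε * ‖y - x‖ := add_le_add hgy hfy
            _ = 2 * ε * ‖y - x‖ := by ring
        have hyx : y - x = r • a := by rw [ya, add_sub_cancel_left]
        have norm_a : ‖a‖ ≤ ‖z‖ + ε := by
          calc ‖a‖ = ‖z + (a - z)‖ := by simp only [_root_.add_sub_cancel]
            _ ≤ ‖z‖ + ‖a - z‖ := norm_add_le _ _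
            _ ≤ ‖z‖ + ε := add_le_add le_rfl (mem_closedBall_iff_norm.1 az)
        have hAa : ‖A a‖ ≤ 2 * ε * (‖z‖ + ε) := by
          have h1 : r * ‖A a‖ ≤ r * (2 * ε * (‖z‖ + ε)) := by
            have : ‖A (r • a)‖ ≤ 2 * ε * ‖r • a‖ := by rw [← hyx]; exact hAyx
            rw [A.map_smul, norm_smul, norm_smul, Real.norm_eq_abs, abs_of_pos rpos] at this
            calc r * ‖A a‖ ≤ 2 * ε * (r * ‖a‖) := this
              _ ≤ 2 * ε * (r * (‖z‖ + ε)) := by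
                  apply mul_le_mul_of_nonneg_left _ (by positivity)
                  exact mul_le_mul_of_nonneg_left norm_a rpos.le
              _ = r * (2 * ε * (‖z‖ + ε)) := by ring
          exact le_of_mul_le_mul_left h1 rpos
        have eAz : A a + A (z - a) = A z := by
          rw [← A.map_add]
          have e2 : a + (z - a) = z := by abel
          rw [e2]
        calc ‖A z‖ = ‖A a + A (z - a)‖ := (congrArg norm eAz).symm
          _ ≤ ‖A a‖ + ‖A (z - a)‖ := norm_add_le _ _
          _ ≤ 2 * ε * (‖z‖ + ε) + ‖A‖ * ε := by
              refine add_le_add hAa ((A.le_opNorm _).trans ?_)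
              have : ‖z - a‖ ≤ ε := by rw [norm_sub_rev]; exact mem_closedBall_iff_norm.1 az
              exact mul_le_mul_of_nonneg_left this (norm_nonneg _)
      have lim : Tendsto (fun ε : ℝ => 2 * ε * (‖z‖ + ε) + ‖A‖ * ε) (𝓝[>] 0) (𝓝 0) := by
        have : Tendsto (fun ε : ℝ => 2 * ε * (‖z‖ + ε) + ‖A‖ * ε) (𝓝 0)
            (𝓝 (2 * 0 * (‖z‖ + 0) + ‖A‖ * 0)) := by
          apply Continuous.tendsto
          fun_prop
        simpa using this.mono_left nhdsWithin_le_nhds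
      apply le_of_tendsto_of_tendsto tendsto_const_nhds lim
      filter_upwards [self_mem_nhdsWithin] with ε hε using H ε hε
    have := le_antisymm hz0 (norm_nonneg _)
    simpa using this
  exact this



lemma abs_min_sub_le' (a b c : ℝ) : |min a b - c| ≤ |a - c| + |b - c| := by
  rcases min_cases a b with ⟨h, _⟩ | ⟨h, _⟩ <;> rw [h]
  · exact le_add_of_nonneg_right (abs_nonneg _)
  · exact le_add_of_nonneg_left (abs_nonneg _)

lemma abs_max_sub_le' (a b c : ℝ) : |max a b - c| ≤ |a - c| + |b - c| := by
  rcases max_cases a b with ⟨h, _⟩ | ⟨h, _⟩ <;> rw [h]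
  · exact le_add_of_nonneg_right (abs_nonneg _)
  · exact le_add_of_nonneg_left (abs_nonneg _)

lemma hasFDerivAt_min' {E : Type*} [NormedAddCommGroup E] [NormedSpace ℝ E]
    {f g : E → ℝ} {A : E →L[ℝ] ℝ} {x : E} (hf : HasFDerivAt f A x) (hg : HasFDerivAt g A x)
    (hfg : f x = g x) : HasFDerivAt (fun y => min (f y) (g y)) A x := by
  rw [hasFDerivAt_iff_isLittleO] at hf hg ⊢
  have hmin : min (f x) (g x) = f x := min_eq_left hfg.le
  refine (Asymptotics.isBigO_of_le _ fun y => ?_).trans_isLittleO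
    (hf.norm_left.add hg.norm_left)
  have h2 : f y - f x - A (y - x) = f y - (f x + A (y - x)) := by ring
  have h3 : g y - g x - A (y - x) = g y - (f x + A (y - x)) := by rw [← hfg]; ring
  have hnn : (0:ℝ) ≤ ‖f y - f x - A (y - x)‖ + ‖g y - g x - A (y - x)‖ := by positivity
  calc ‖min (f y) (g y) - min (f x) (g x) - A (y - x)‖
      = |min (f y) (g y) - (f x + A (y - x))| := by
        rw [Real.norm_eq_abs, hmin, sub_sub]
    _ ≤ |f y - (f x + A (y - x))| + |g y - (f x + A (y - x))| := abs_min_sub_le' _ _ _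
    _ = ‖‖f y - f x - A (y - x)‖ + ‖g y - g x - A (y - x)‖‖ := by
        rw [Real.norm_eq_abs (‖f y - f x - A (y - x)‖ + ‖g y - g x - A (y - x)‖),
          abs_of_nonneg hnn, Real.norm_eq_abs, Real.norm_eq_abs, h2, h3]

lemma hasFDerivAt_max' {E : Type*} [NormedAddCommGroup E] [NormedSpace ℝ E]
    {f g : E → ℝ} {A : E →L[ℝ] ℝ} {x : E} (hf : HasFDerivAt f A x) (hg : HasFDerivAt g A x)
    (hfg : f x = g x) : HasFDerivAt (fun y => max (f y) (g y)) A x := by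
  rw [hasFDerivAt_iff_isLittleO] at hf hg ⊢
  have hmax : max (f x) (g x) = f x := max_eq_left hfg.ge
  refine (Asymptotics.isBigO_of_le _ fun y => ?_).trans_isLittleO
    (hf.norm_left.add hg.norm_left)
  have h2 : f y - f x - A (y - x) = f y - (f x + A (y - x)) := by ring
  have h3 : g y - g x - A (y - x) = g y - (f x + A (y - x)) := by rw [← hfg]; ring
  have hnn : (0:ℝ) ≤ ‖f y - f x - A (y - x)‖ + ‖g y - g x - A (y - x)‖ := by positivity
  calc ‖max (f y) (g y) - max (f x) (g x) - A (y - x)‖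
      = |max (f y) (g y) - (f x + A (y - x))| := by
        rw [Real.norm_eq_abs, hmax, sub_sub]
    _ ≤ |f y - (f x + A (y - x))| + |g y - (f x + A (y - x))| := abs_max_sub_le' _ _ _
    _ = ‖‖f y - f x - A (y - x)‖ + ‖g y - g x - A (y - x)‖‖ := by
        rw [Real.norm_eq_abs (‖f y - f x - A (y - x)‖ + ‖g y - g x - A (y - x)‖),
          abs_of_nonneg hnn, Real.norm_eq_abs, Real.norm_eq_abs, h2, h3]

lemma gradient_congr_nhds {d : ℕ} {f g : EuclideanSpace ℝ (Fin d) → ℝ}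
    {x : EuclideanSpace ℝ (Fin d)} (h : f =ᶠ[𝓝 x] g) : gradient f x = gradient g x := by
  unfold gradient
  rw [h.fderiv_eq]

lemma measurable_norm_gradient {d : ℕ} (f : EuclideanSpace ℝ (Fin d) → ℝ) :
    Measurable fun x => ‖gradient f x‖ := by
  have : Measurable fun x => gradient f x := by
    unfold gradient
    exact ((InnerProductSpace.toDual ℝ (EuclideanSpace ℝ (Fin d))).symm.continuous.measurable).comp
      (measurable_fderiv ℝ f)
  exact this.norm

lemma grad_pair {d : ℕ} {u₁ u₂ : EuclideanSpace ℝ (Fin d) → ℝ} {L₁ L₂ : NNReal}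
    (h₁ : LipschitzWith L₁ u₁) (h₂ : LipschitzWith L₂ u₂) :
    ∀ᵐ x ∂(volume : Measure (EuclideanSpace ℝ (Fin d))),
      (gradient (fun y => min (u₁ y) (u₂ y)) x = gradient u₁ x ∧
       gradient (fun y => max (u₁ y) (u₂ y)) x = gradient u₂ x) ∨
      (gradient (fun y => min (u₁ y) (u₂ y)) x = gradient u₂ x ∧
       gradient (fun y => max (u₁ y) (u₂ y)) x = gradient u₁ x) := by
  filter_upwards [h₁.ae_differentiableAt (μ := volume), h₂.ae_differentiableAt (μ := volume),
    ae_fderiv_eq_of_eq u₁ u₂ h₁.continuous h₂.continuous] with x hx1 hx2 hkey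
  rcases lt_trichotomy (u₁ x) (u₂ x) with h | h | h
  · left
    have hev : ∀ᶠ y in nhds x, u₁ y < u₂ y :=
      (h₁.continuous.continuousAt).eventually_lt (h₂.continuous.continuousAt) h
    exact ⟨gradient_congr_nhds (hev.mono fun y hy => min_eq_left hy.le),
      gradient_congr_nhds (hev.mono fun y hy => max_eq_right hy.le)⟩
  · have hfd := hkey h hx1 hx2
    have h2' : HasFDerivAt u₂ (fderiv ℝ u₁ x) x := by rw [hfd]; exact hx2.hasFDerivAt
    have hmin : HasFDerivAt (fun y => min (u₁ y) (u₂ y)) (fderiv ℝ u₁ x) x :=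
      hasFDerivAt_min' hx1.hasFDerivAt h2' h
    have hmax : HasFDerivAt (fun y => max (u₁ y) (u₂ y)) (fderiv ℝ u₁ x) x :=
      hasFDerivAt_max' hx1.hasFDerivAt h2' h
    left
    constructor
    · show gradient _ x = gradient u₁ x
      unfold gradient
      rw [hmin.fderiv]
    · show gradient _ x = gradient u₂ x
      unfold gradient
      rw [hmax.fderiv, hfd]
  · right
    have hev : ∀ᶠ y in nhds x, u₂ y < u₁ y :=
      (h₂.continuous.continuousAt).eventually_lt (h₁.continuous.continuousAt) h
    exact ⟨gradient_congr_nhds (hev.mono fun y hy => min_eq_right hy.le),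
      gradient_congr_nhds (hev.mono fun y hy => max_eq_left hy.le)⟩

lemma integrable_bdd_mul_sq {d : ℕ} (V : EuclideanSpace ℝ (Fin d) → ℝ)
    (hV : MemLp V ⊤ (volume : Measure (EuclideanSpace ℝ (Fin d))))
    (u : EuclideanSpace ℝ (Fin d) → ℝ)
    (hu : MemLp u 2 (volume : Measure (EuclideanSpace ℝ (Fin d)))) :
    Integrable (fun x => V x * u x ^ 2) (volume : Measure (EuclideanSpace ℝ (Fin d))) := by
  have h2 : Integrable (fun x => u x ^ 2) volume := hu.integrable_sq
  refine Integrable.bdd_mul (c := (eLpNormEssSup V volume).toReal) h2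
    hV.aestronglyMeasurable ?_
  have hne : eLpNormEssSup V volume ≠ ⊤ := by
    have := hV.2
    rw [eLpNorm_exponent_top] at this
    exact this.ne
  filter_upwards [ae_le_eLpNormEssSup (f := V) (μ := volume)] with x hx
  calc ‖V x‖ = ((‖V x‖₊ : ENNReal)).toReal := by simp
    _ ≤ (eLpNormEssSup V volume).toReal := ENNReal.toReal_mono hne hx


/-- Lemma 3.1: for potentials `V₁ ≥ V₂` a.e. and `u₁, u₂ ∈ K`,
the pointwise min and max belong to `K` and
`F_{V₁}(min{u₁,u₂}) + F_{V₂}(max{u₁,u₂}) ≤ F_{V₁}(u₁) + F_{V₂}(u₂)`. -/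
theorem energy_min_max_comparison
    (d : ℕ) (hd : 2 ≤ d)
    (V₁ V₂ : EuclideanSpace ℝ (Fin d) → ℝ)
    (hV₁ : MemLp V₁ ⊤ (volume : Measure (EuclideanSpace ℝ (Fin d))))
    (hV₂ : MemLp V₂ ⊤ (volume : Measure (EuclideanSpace ℝ (Fin d))))
    (hle : ∀ᵐ x : EuclideanSpace ℝ (Fin d), V₂ x ≤ V₁ x)
    (u₁ u₂ : EuclideanSpace ℝ (Fin d) → ℝ)
    (h₁ : memK d u₁) (h₂ : memK d u₂) :
    memK d (fun x => min (u₁ x) (u₂ x)) ∧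
    memK d (fun x => max (u₁ x) (u₂ x)) ∧
    FV d V₁ (fun x => min (u₁ x) (u₂ x)) + FV d V₂ (fun x => max (u₁ x) (u₂ x))
      ≤ FV d V₁ u₁ + FV d V₂ u₂ := by
  obtain ⟨⟨L₁, hL₁⟩, hb₁, hm₁, hg₁⟩ := h₁
  obtain ⟨⟨L₂, hL₂⟩, hb₂, hm₂, hg₂⟩ := h₂
  have hpair := grad_pair hL₁ hL₂
  set m : EuclideanSpace ℝ (Fin d) → ℝ := fun x => min (u₁ x) (u₂ x) with hm_def
  set M : EuclideanSpace ℝ (Fin d) → ℝ := fun x => max (u₁ x) (u₂ x) with hM_def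
  have hmx : ∀ x, m x = min (u₁ x) (u₂ x) := fun x => rfl
  have hMx : ∀ x, M x = max (u₁ x) (u₂ x) := fun x => rfl
  -- L² membership of m and M
  have hmm : MemLp m 2 (volume : Measure (EuclideanSpace ℝ (Fin d))) := by
    refine MemLp.mono hm₁ ((hL₁.continuous.min hL₂.continuous).aestronglyMeasurable) ?_
    filter_upwards with x
    rw [hmx x, Real.norm_eq_abs, Real.norm_eq_abs,
      abs_of_nonneg (le_min (hb₁ x).1 (hb₂ x).1), abs_of_nonneg (hb₁ x).1]
    exact min_le_left _ _
  have hMm : MemLp M 2 (volume : Measure (EuclideanSpace ℝ (Fin d))) := by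
    refine MemLp.mono (hm₁.add hm₂) ((hL₁.continuous.max hL₂.continuous).aestronglyMeasurable) ?_
    filter_upwards with x
    simp only [Pi.add_apply]
    rw [hMx x, Real.norm_eq_abs, Real.norm_eq_abs,
      abs_of_nonneg (le_max_of_le_left (hb₁ x).1),
      abs_of_nonneg (add_nonneg (hb₁ x).1 (hb₂ x).1)]
    exact max_le (le_add_of_nonneg_right (hb₂ x).1) (le_add_of_nonneg_left (hb₁ x).1)
  -- L² membership of the gradients of m and M
  have hgm : MemLp (fun x => ‖gradient m x‖) 2 (volume : Measure (EuclideanSpace ℝ (Fin d))) := by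
    refine MemLp.mono (hg₁.add hg₂) ((measurable_norm_gradient m).aestronglyMeasurable) ?_
    filter_upwards [hpair] with x hx
    simp only [Pi.add_apply]
    rw [norm_norm, Real.norm_eq_abs,
      abs_of_nonneg (add_nonneg (norm_nonneg _) (norm_nonneg _))]
    rcases hx with ⟨e1, _⟩ | ⟨e1, _⟩ <;> rw [e1]
    · exact le_add_of_nonneg_right (norm_nonneg _)
    · exact le_add_of_nonneg_left (norm_nonneg _)
  have hgM : MemLp (fun x => ‖gradient M x‖) 2 (volume : Measure (EuclideanSpace ℝ (Fin d))) := by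
    refine MemLp.mono (hg₁.add hg₂) ((measurable_norm_gradient M).aestronglyMeasurable) ?_
    filter_upwards [hpair] with x hx
    simp only [Pi.add_apply]
    rw [norm_norm, Real.norm_eq_abs,
      abs_of_nonneg (add_nonneg (norm_nonneg _) (norm_nonneg _))]
    rcases hx with ⟨_, e2⟩ | ⟨_, e2⟩ <;> rw [e2]
    · exact le_add_of_nonneg_left (norm_nonneg _)
    · exact le_add_of_nonneg_right (norm_nonneg _)
  -- Integrability of the four energy integrands
  have I1 : Integrable (fun x => ‖gradient m x‖ ^ 2 + V₁ x * m x ^ 2)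
      (volume : Measure (EuclideanSpace ℝ (Fin d))) :=
    hgm.integrable_sq.add (integrable_bdd_mul_sq V₁ hV₁ m hmm)
  have I2 : Integrable (fun x => ‖gradient M x‖ ^ 2 + V₂ x * M x ^ 2)
      (volume : Measure (EuclideanSpace ℝ (Fin d))) :=
    hgM.integrable_sq.add (integrable_bdd_mul_sq V₂ hV₂ M hMm)
  have J1 : Integrable (fun x => ‖gradient u₁ x‖ ^ 2 + V₁ x * u₁ x ^ 2)
      (volume : Measure (EuclideanSpace ℝ (Fin d))) :=
    hg₁.integrable_sq.add (integrable_bdd_mul_sq V₁ hV₁ u₁ hm₁)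
  have J2 : Integrable (fun x => ‖gradient u₂ x‖ ^ 2 + V₂ x * u₂ x ^ 2)
      (volume : Measure (EuclideanSpace ℝ (Fin d))) :=
    hg₂.integrable_sq.add (integrable_bdd_mul_sq V₂ hV₂ u₂ hm₂)
  refine ⟨⟨⟨max L₁ L₂, hL₁.min hL₂⟩,
      fun x => ⟨le_min (hb₁ x).1 (hb₂ x).1, (min_le_left _ _).trans (hb₁ x).2⟩, hmm, hgm⟩,
    ⟨⟨max L₁ L₂, hL₁.max hL₂⟩,
      fun x => ⟨le_max_of_le_left (hb₁ x).1, max_le (hb₁ x).2 (hb₂ x).2⟩, hMm, hgM⟩, ?_⟩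
  -- the energy inequality
  have hae : (fun x => (‖gradient m x‖ ^ 2 + V₁ x * m x ^ 2)
        + (‖gradient M x‖ ^ 2 + V₂ x * M x ^ 2)) ≤ᵐ[volume]
      fun x => (‖gradient u₁ x‖ ^ 2 + V₁ x * u₁ x ^ 2)
        + (‖gradient u₂ x‖ ^ 2 + V₂ x * u₂ x ^ 2) := by
    filter_upwards [hpair, hle] with x hp hV
    have hgrad : ‖gradient m x‖ ^ 2 + ‖gradient M x‖ ^ 2
        = ‖gradient u₁ x‖ ^ 2 + ‖gradient u₂ x‖ ^ 2 := by
      rcases hp with ⟨e1, e2⟩ | ⟨e1, e2⟩ <;> rw [e1, e2] <;> ring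
    have hpot : V₁ x * m x ^ 2 + V₂ x * M x ^ 2 ≤ V₁ x * u₁ x ^ 2 + V₂ x * u₂ x ^ 2 := by
      rcases le_total (u₁ x) (u₂ x) with h | h
      · rw [hmx x, hMx x, min_eq_left h, max_eq_right h]
      · rw [hmx x, hMx x, min_eq_right h, max_eq_left h]
        nlinarith [mul_nonneg (sub_nonneg.2 hV) (sub_nonneg.2 (pow_le_pow_left₀ (hb₂ x).1 h 2))]
    linarith [hgrad, hpot]
  calc FV d V₁ m + FV d V₂ M
      = ∫ x : EuclideanSpace ℝ (Fin d), ((‖gradient m x‖ ^ 2 + V₁ x * m x ^ 2)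
          + (‖gradient M x‖ ^ 2 + V₂ x * M x ^ 2)) := by
        rw [FV, FV, ← integral_add I1 I2]
    _ ≤ ∫ x : EuclideanSpace ℝ (Fin d), ((‖gradient u₁ x‖ ^ 2 + V₁ x * u₁ x ^ 2)
          + (‖gradient u₂ x‖ ^ 2 + V₂ x * u₂ x ^ 2)) :=
        integral_mono_ae (I1.add I2) (J1.add J2) hae
    _ = FV d V₁ u₁ + FV d V₂ u₂ := by rw [FV, FV, integral_add J1 J2]
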